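/- arXiv:1807.02904 — 2 statements merged into one kernel-verified Lean document; each statement's English description precedes it below -/
import Mathlib

section
/- Let u ≤ w in Bruhat order on Sₙ, let v ↦ v' be the greedy operation associated to w, and let v ∈ Sₙ satisfy v' = u. Then for every (a,b) ∈ E_w(u) one has v⁻¹(a) < v⁻¹(b); equivalently, C(v) ⊆ {x ∈ ℝⁿ : x_b ≥ x_a for all (a,b) ∈ E_w(u)}. -/
namespace SchubertToric

open Equiv

/-- The number of inversions (= the length `ℓ`) of a permutation. -/
def invCount {n : ℕ} (w : Equiv.Perm (Fin n)) : ℕ :=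
  ((Finset.univ : Finset (Fin n × Fin n)).filter fun p => p.1 < p.2 ∧ w p.2 < w p.1).card

/-- `initSeg w d` is the set `{w(1), …, w(d)}` (0-indexed: images of the first `d` indices). -/
def initSeg {n : ℕ} (w : Equiv.Perm (Fin n)) (d : ℕ) : Finset (Fin n) :=
  (Finset.univ.filter fun i : Fin n => (i : ℕ) < d).image w

/-- `domLE S T`: the increasing rearrangement of `S` is componentwise ≤ that of `T`. -/
def domLE {n : ℕ} (S T : Finset (Fin n)) : Prop :=
  List.Forall₂ (· ≤ ·) (S.sort (· ≤ ·)) (T.sort (· ≤ ·))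

/-- Bruhat order on `
Sₙ`, via the tableau criterion. -/
def bruhatLE {n : ℕ} (v w : Equiv.Perm (Fin n)) : Prop :=
  ∀ d : ℕ, domLE (initSeg v d) (initSeg w d)

/-- `GreedyRel w v vp` says that `vp = v'`, the result of the greedy operation associated
to `w`: there is a sequence of indices `idx 0, idx 1, …`, each chosen as the *least* index
not previously chosen such that the increasing rearrangement of the previously chosen values
together with the new value is componentwise at most `{w(1),…,w(d)}`, and `vp d = v (idx d)`. -/
def GreedyRel {n : ℕ} (w v vp : Equiv.Perm (Fin n)) : Prop :=
  ∃ idx : Fin n → Fin n,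
    (∀ d : Fin n, vp d = v (idx d)) ∧
    ∀ d : Fin n,
      IsLeast {i : Fin n |
        (∀ e : Fin n, e < d → idx e ≠ i) ∧
        domLE (insert (v i)
            ((Finset.univ.filter fun e : Fin n => e < d).image fun e => v (idx e)))
          (initSeg w ((d : ℕ) + 1))}
        (idx d)

/-- Right weak order: `rightWeakLE u v` iff `v = u·s_{i₁}⋯s_{i_k}` with
`ℓ(u·s_{i₁}⋯s_{i_j}) = ℓ(u) + j` for all `0 ≤ j ≤ k`. -/
def rightWeakLE {n : ℕ} (u v : Equiv.Perm (Fin n)) : Prop :=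
  ∃ L : List (Equiv.Perm (Fin n)),
    (∀ s ∈ L, ∃ (i : Fin n) (h : (i : ℕ) + 1 < n), s = Equiv.swap i ⟨(i : ℕ) + 1, h⟩) ∧
    v = u * L.prod ∧
    ∀ k ≤ L.length, invCount (u * (L.take k).prod) = invCount u + k

/-- `Ref(w) = {(w(i),w(j)) : i < j, ℓ(w) − ℓ(t_{w(i),w(j)}·w) = 1}`. -/
def RefSet {n : ℕ} (w : Equiv.Perm (Fin n)) : Set (Fin n × Fin n) :=
  {p | ∃ i j : Fin n, i < j ∧ p = (w i, w j) ∧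
    invCount (Equiv.swap (w i) (w j) * w) + 1 = invCount w}

/-- The (undirected) graph `Γ_w` on `Fin n` whose edges are the pairs in `Ref(w)`. -/
def refGraph {n : ℕ} (w : Equiv.Perm (Fin n)) : SimpleGraph (Fin n) :=
  SimpleGraph.fromRel fun a b => (a, b) ∈ RefSet w

/-- The vertices of `Γ_w`: the integers occurring in pairs of `Ref(w)`. -/
def refVerts {n : ℕ} (w : Equiv.Perm (Fin n)) : Set (Fin n) :=
  {a | ∃ b, (a, b) ∈ RefSet w ∨ (b, a) ∈ RefSet w}

/-- The cone `C(v) = {x ∈ ℝⁿ : x_{v(1)} ≤ x_{v(2)} ≤ ⋯ ≤ x_{v(n)}}`. -/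
def coneC {n : ℕ} (v : Equiv.Perm (Fin n)) : Set (Fin n → ℝ) :=
  {x | ∀ i j : Fin n, i ≤ j → x (v i) ≤ x (v j)}

/-- `Ẽ_w(u) = {(u(i),u(j)) : i < j, t_{u(i),u(j)}·u ≤ w, |ℓ(u) − ℓ(t_{u(i),u(j)}·u)| = 1}`. -/
def Etil {n : ℕ} (w u : Equiv.Perm (Fin n)) : Set (Fin n × Fin n) :=
  {p | ∃ i j : Fin n, i < j ∧ p = (u i, u j) ∧
    bruhatLE (Equiv.swap (u i) (u j) * u) w ∧
    (invCount (Equiv.swap (u i) (u j) * u) + 1 = invCount u ∨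
      invCount u + 1 = invCount (Equiv.swap (u i) (u j) * u))}

/-- An element `p = (a,b)` of `Ẽ_w(u)` is decomposable if it is a sum (under
`(a,b)+(b,c) = (a,c)`) of two or more other elements of `Ẽ_w(u)`. -/
def Decomposable {n : ℕ} (w u : Equiv.Perm (Fin n)) (p : Fin n × Fin n) : Prop :=
  ∃ (m : ℕ) (c : ℕ → Fin n), 2 ≤ m ∧ c 0 = p.1 ∧ c m = p.2 ∧
    ∀ i < m, (c i, c (i + 1)) ∈ Etil w u ∧ (c i, c (i + 1)) ≠ p

/-- `E_w(u)`: the indecomposable elements of `Ẽ_w(u)`. -/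
def Ew {n : ℕ} (w u : Equiv.Perm (Fin n)) : Set (Fin n × Fin n) :=
  {p | p ∈ Etil w u ∧ ¬ Decomposable w u p}

/-- The longest element `w₀ = n(n−1)⋯21` of `Sₙ`. -/
def w0 {n : ℕ} : Equiv.Perm (Fin n) :=
  Function.Involutive.toPerm Fin.rev Fin.rev_rev

/-- If `u ≤ w` and `v' = u`, then for every `(a,b) ∈ E_w(u)` one has
`v⁻¹(a) < v⁻¹(b)`; equivalently `C(v) ⊆ {x : x_b ≥ x_a ∀ (a,b) ∈ E_w(u)}`. -/
theorem cone_subset_of_greedy_eq_u {n : ℕ} (w u v : Equiv.Perm (Fin n))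
    (huw : bruhatLE u w) (h : GreedyRel w v u) :
    (∀ a b : Fin n, (a, b) ∈ Ew w u → v.symm a < v.symm b) ∧
    (∀ x ∈ coneC v, ∀ a b : Fin n, (a, b) ∈ Ew w u → x a ≤ x b) := by

  obtain ⟨idx, hvp, hleast⟩ := h
  have key : ∀ a b : Fin n, (a, b) ∈ Ew w u → v.symm a < v.symm b := by
    intro a b hab
    obtain ⟨⟨i, j, hij, hpe, hble, _⟩, _⟩ := hab
    have ha : a = u i := by simpa using congrArg Prod.fst hpe
    have hb : b = u j := by simpa using congrArg Prod.snd hpe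
    subst ha; subst hb
    have hidx : ∀ d : Fin n, idx d = v.symm (u d) := by
      intro d; rw [hvp d]; simp
    have hijn : (i : ℕ) < (j : ℕ) := hij
    -- the finset equality
    have hset : initSeg (Equiv.swap (u i) (u j) * u) ((i : ℕ) + 1)
        = insert (u j) ((Finset.univ.filter fun e : Fin n => e < i).image fun e => u e) := by
      ext x
      simp only [initSeg, Finset.mem_image, Finset.mem_filter, Finset.mem_univ, true_and,
        Finset.mem_insert, Equiv.Perm.mul_apply]
      constructor
      · rintro ⟨k, hk, rfl⟩
        rcases eq_or_ne k i with rfl | hki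
        · left; rw [Equiv.swap_apply_left]
        · right
          have hkv : (k : ℕ) < (i : ℕ) := by
            rcases lt_or_eq_of_le (Nat.lt_succ_iff.mp hk) with h' | h'
            · exact h'
            · exact absurd (Fin.ext h') hki
          have hkj : k ≠ j := by
            intro hkj; rw [hkj] at hkv; omega
          exact ⟨k, hkv, by
            rw [Equiv.swap_apply_of_ne_of_ne (u.injective.ne hki) (u.injective.ne hkj)]⟩
      · rintro (rfl | ⟨e, he, rfl⟩)
        · exact ⟨i, Nat.lt_succ_self _, by rw [Equiv.swap_apply_left]⟩
        · have hei : e ≠ i := ne_of_lt he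
          have hej : e ≠ j := ne_of_lt (he.trans hij)
          exact ⟨e, Nat.lt_succ_of_lt he, by
            rw [Equiv.swap_apply_of_ne_of_ne (u.injective.ne hei) (u.injective.ne hej)]⟩
    have hmem : idx j ∈ {i' : Fin n |
        (∀ e : Fin n, e < i → idx e ≠ i') ∧
        domLE (insert (v i')
            ((Finset.univ.filter fun e : Fin n => e < i).image fun e => v (idx e)))
          (initSeg w ((i : ℕ) + 1))} := by
      constructor
      · intro e he heq
        have : u e = u j := by rw [hvp e, hvp j, heq]
        have : e = j := u.injective this
        subst this
        exact absurd (he.trans hij) (lt_irrefl _)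
      · have himg : ((Finset.univ.filter fun e : Fin n => e < i).image fun e => v (idx e))
            = ((Finset.univ.filter fun e : Fin n => e < i).image fun e => u e) := by
          apply Finset.image_congr
          intro e _; exact (hvp e).symm
        rw [himg, ← hvp j, ← hset]
        exact hble ((i : ℕ) + 1)
    have hle : idx i ≤ idx j := (hleast i).2 hmem
    have hne : idx i ≠ idx j := by
      intro heq
      have : u i = u j := by rw [hvp i, hvp j, heq]
      exact absurd (u.injective this) (ne_of_lt hij)
    have : idx i < idx j := lt_of_le_of_ne hle hne
    rw [hidx i, hidx j] at this
    exact this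
  refine ⟨key, ?_⟩
  intro x hx a b hab
  have hlt := key a b hab
  have := hx (v.symm a) (v.symm b) hlt.le
  simpa using this

end SchubertToric
end

section
/- Let u ≤ w in Bruhat order on Sₙ and let v ↦ v' be the greedy operation associated to w. For x ∈ ℝⁿ the following are equivalent: (i) x_b ≥ x_a for every (a,b) ∈ E_w(u); (ii) there exists v ∈ Sₙ with v' = u and x_{v(1)} ≤ x_{v(2)} ≤ ⋯ ≤ x_{v(n)}. Equivalently, the dual cone of the cone generated by {e_y − e_x : (x,y) ∈ E_w(u)} equals the union of the cones C(v) over all v ∈ Sₙ with v' = u. -/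
namespace SchubertToric

open Equiv

/-!
For `(ii) ⇒ (i)`: if `(u(i), u(j)) ∈ Ẽ_w(u)` with `i < j`, then `t·u ≤ w` says precisely that
`u(j)` is still an admissible choice at step `i` of the greedy construction, so `u(i)` is taken
from an earlier place of `v` than `u(j)`, and `x_{u(i)} ≤ x_{u(j)}` when `x ∘ v` is increasing.

For `(i) ⇒ (ii)`: the inequalities pass from `E_w(u)` to `Ẽ_w(u)` by splitting decomposable
pairs. Let `v = u ∘ σ`, where `σ` sorts `x ∘ u` stably. If the greedy step `d` could choose a value
`u(e)`, `e > d`, placed before `u(d)` in `v`, then `x_{u(e)} < x_{u(d)}`. But covering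
transpositions of `u` lead from `u(d)` to `u(e)` inside `Ẽ_w(u)`: descents stay below `w`
automatically, and for an ascent one uses the first position after `d` carrying an admissible
value; the tableau criterion, read as inequalities between counts of large values in initial
segments, shows that the transposition with that position stays below `w`. Hence
`x_{u(d)} ≤ x_{u(e)}`, a contradiction, and so `v' = u`.
-/

open Finset

section SortedLists

variable {α : Type*} [LinearOrder α]

theorem forall₂_le_iff_countP_le {l₁ l₂ : List α} (h₁ : l₁.Pairwise (· ≤ ·))
    (h₂ : l₂.Pairwise (· ≤ ·)) :
    List.Forall₂ (· ≤ ·) l₁ l₂ ↔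
      l₁.length = l₂.length ∧ ∀ g, l₁.countP (g ≤ ·) ≤ l₂.countP (g ≤ ·) := by
  constructor
  · intro h
    refine ⟨h.length_eq, fun g => ?_⟩
    induction h with
    | nil => rfl
    | @cons a b _ _ hab _ ih =>
      have ih := ih (List.pairwise_cons.mp h₁).2 (List.pairwise_cons.mp h₂).2
      simp only [List.countP_cons, decide_eq_true_eq]
      by_cases hga : g ≤ a
      · simp [hga, hga.trans hab, ih]
      · rw [if_neg hga]
        split_ifs <;> omega
  · induction l₁ generalizing l₂ with
    | nil => rintro ⟨hlen, -⟩; simp_all [List.length_eq_zero_iff.mp hlen.symm]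
    | cons a t ih =>
      obtain _ | ⟨b, t₂⟩ := l₂
      · simp
      rintro ⟨hlen, hcount⟩
      rw [List.pairwise_cons] at h₁ h₂
      simp only [List.length_cons, add_left_inj] at hlen
      -- every entry of the first list is `≥ a`, so `a ≤ b` is forced by the count at `a`
      have hab : a ≤ b := by
        by_contra hba
        have := hcount a
        rw [List.countP_cons, List.countP_cons,
          List.countP_eq_length.mpr (by simpa using h₁.1)] at this
        have := List.countP_le_length (p := (a ≤ ·)) (l := t₂)
        simp [hba] at *
        omega
      refine List.Forall₂.cons hab (ih h₁.2 h₂.2 ⟨hlen, fun g => ?_⟩)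
      have hg := hcount g
      simp only [List.countP_cons, decide_eq_true_eq] at hg
      by_cases hgb : g ≤ b
      · by_cases hga : g ≤ a
        · simpa [hga, hgb] using hg
        · rw [(List.countP_eq_length (l := t₂)).mpr
            (by simpa using fun x hx => hgb.trans (h₂.1 x hx)), ← hlen]
          exact List.countP_le_length
      · have hga : ¬ g ≤ a := fun h => hgb (h.trans hab)
        simpa [hga, hgb] using hg

theorem countP_sort (S : Finset α) (g : α) :
    (S.sort (· ≤ ·)).countP (g ≤ ·) = #{x ∈ S | g ≤ x} := by
  rw [← Multiset.coe_countP, Finset.sort_eq, Multiset.countP_eq_card_filter]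
  rfl

end SortedLists

section Counting

variable {n : ℕ}

theorem domLE_iff_card_filter_le {S T : Finset (Fin n)} :
    domLE S T ↔ #S = #T ∧ ∀ g, #{s ∈ S | g ≤ s} ≤ #{t ∈ T | g ≤ t} := by
  rw [domLE, forall₂_le_iff_countP_le (S.pairwise_sort _) (T.pairwise_sort _), length_sort,
    length_sort]
  simp only [countP_sort]

def segCount (σ : Perm (Fin n)) (a b : ℕ) (g : Fin n) : ℕ :=
  #{q : Fin n | a ≤ q ∧ q < b ∧ g ≤ σ q}

theorem mem_initSeg {σ : Perm (Fin n)} {d : ℕ} {y : Fin n} :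
    y ∈ initSeg σ d ↔ (σ.symm y : ℕ) < d := by
  simp only [initSeg, mem_image, mem_filter, mem_univ, true_and]
  exact ⟨by rintro ⟨i, hi, rfl⟩; simpa using hi, fun h => ⟨σ.symm y, h, by simp⟩⟩

theorem card_initSeg_filter (σ : Perm (Fin n)) (s : ℕ) (g : Fin n) :
    #{y ∈ initSeg σ s | g ≤ y} = segCount σ 0 s g := by
  rw [initSeg, filter_image, card_image_of_injective _ σ.injective, filter_filter, segCount]
  simp

theorem segCount_add (σ : Perm (Fin n)) {a b c : ℕ} (hab : a ≤ b) (hbc : b ≤ c) (g : Fin n) :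
    segCount σ a b g + segCount σ b c g = segCount σ a c g := by
  rw [segCount, segCount, segCount, ← card_union_of_disjoint]
  · congr 1
    ext q
    simp only [mem_union, mem_filter, mem_univ, true_and]
    omega
  · rw [disjoint_filter]
    omega

theorem segCount_succ (σ : Perm (Fin n)) {a : ℕ} {d : Fin n} (had : a ≤ d) (g : Fin n) :
    segCount σ a (d + 1) g = segCount σ a d g + if g ≤ σ d then 1 else 0 := by
  rw [← segCount_add σ had (Nat.le_add_right _ 1)]
  congr 1
  have : ({q : Fin n | (d : ℕ) ≤ q ∧ (q : ℕ) < d + 1 ∧ g ≤ σ q} : Finset _) =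
      ({d} : Finset (Fin n)).filter (g ≤ σ ·) := by
    ext q
    simp only [mem_filter, mem_univ, mem_singleton, true_and]
    constructor
    · rintro ⟨h1, h2, h3⟩
      exact ⟨Fin.ext (by omega), h3⟩
    · rintro ⟨rfl, h⟩
      exact ⟨le_rfl, by omega, h⟩
  rw [segCount, this, filter_singleton]
  split_ifs <;> rfl

theorem segCount_anti (σ : Perm (Fin n)) (a b : ℕ) {g h : Fin n} (hgh : g ≤ h) :
    segCount σ a b h ≤ segCount σ a b g :=
  card_le_card fun q => by
    simpa only [mem_filter, mem_univ, true_and] using fun hq => ⟨hq.1, hq.2.1, hgh.trans hq.2.2⟩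

theorem bruhatLE_iff_segCount {v w : Perm (Fin n)} :
    bruhatLE v w ↔ ∀ s g, segCount v 0 s g ≤ segCount w 0 s g := by
  have hcard : ∀ s, #(initSeg v s) = #(initSeg w s) := fun s => by
    rw [initSeg, initSeg, card_image_of_injective _ v.injective,
      card_image_of_injective _ w.injective]
  simp only [bruhatLE, domLE_iff_card_filter_le, card_initSeg_filter, hcard, true_and]

end Counting

section Inversions

variable {n : ℕ}

/-- Matches the inversions of `u * τ` with those of `u`: a pair whose order `τ` preserves is
sent to its image under `τ`, a pair whose order `τ` reverses is kept. -/
def reflectPair (τ : Perm (Fin n)) (p : Fin n × Fin n) : Fin n × Fin n :=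
  if τ p.1 < τ p.2 then (τ p.1, τ p.2) else p

theorem reflectPair_fst_lt_snd (τ : Perm (Fin n)) {p : Fin n × Fin n} (hp : p.1 < p.2) :
    (reflectPair τ p).1 < (reflectPair τ p).2 := by
  by_cases h : τ p.1 < τ p.2 <;> simp [reflectPair, h, hp]

theorem reflectPair_reflectPair {τ : Perm (Fin n)} (hτ : Function.Involutive τ)
    {p : Fin n × Fin n} (hp : p.1 < p.2) : reflectPair τ (reflectPair τ p) = p := by
  by_cases h : τ p.1 < τ p.2 <;> simp [reflectPair, h, hp, hτ _]

theorem not_swap_lt_swap_iff {i j p q : Fin n} (hij : i < j) (hpq : p < q) :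
    ¬ swap i j p < swap i j q ↔ (p = i ∧ q ≤ j) ∨ (i ≤ p ∧ q = j) := by
  rw [swap_apply_def, swap_apply_def]
  split_ifs <;> simp only [Fin.lt_def, Fin.le_def, Fin.ext_iff] at * <;> omega

theorem reflectPair_swap_eq_iff {i j : Fin n} (hij : i < j) {p : Fin n × Fin n}
    (hp : p.1 < p.2) : reflectPair (swap i j) p = (i, j) ↔ p = (i, j) := by
  by_cases h : swap i j p.1 < swap i j p.2
  · simp only [reflectPair, h, if_true, Prod.ext_iff, swap_apply_eq_iff, swap_apply_left,
      swap_apply_right]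
    constructor
    · rintro ⟨h1, h2⟩
      exact absurd (h1 ▸ h2 ▸ hp) (lt_asymm hij)
    · rintro ⟨h1, h2⟩
      rw [h1, h2, swap_apply_left, swap_apply_right] at h
      exact absurd hij (lt_asymm h)
  · simp [reflectPair, h]

theorem mul_swap_reflectPair_lt_iff {u : Perm (Fin n)} {i j : Fin n} (hij : i < j)
    (hmid : ∀ k, i < k → k < j → (u k < u i ↔ u k < u j)) {p : Fin n × Fin n}
    (hp : p.1 < p.2) (hne : p ≠ (i, j)) :
    (u * swap i j) (reflectPair (swap i j) p).2 < (u * swap i j) (reflectPair (swap i j) p).1 ↔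
      u p.2 < u p.1 := by
  by_cases h : swap i j p.1 < swap i j p.2
  · simp [reflectPair, h]
  simp only [reflectPair, h, if_false, Perm.mul_apply]
  rcases (not_swap_lt_swap_iff hij hp).mp h with ⟨h1, h2⟩ | ⟨h1, h2⟩
  · have h2 : p.2 < j := lt_of_le_of_ne h2 fun h => hne (Prod.ext h1 h)
    rw [h1, swap_apply_left, swap_apply_of_ne_of_ne (h1 ▸ hp).ne' h2.ne]
    exact (hmid _ (h1 ▸ hp) h2).symm
  · have h1 : i < p.1 := lt_of_le_of_ne h1 fun h => hne (Prod.ext h.symm h2)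
    rw [h2, swap_apply_right, swap_apply_of_ne_of_ne h1.ne' (h2 ▸ hp).ne]
    simpa only [not_lt, (u.injective.ne h1.ne).le_iff_lt,
      (u.injective.ne (h2 ▸ hp).ne').le_iff_lt] using (hmid _ h1 (h2 ▸ hp)).not

theorem invCount_mul_swap {u : Perm (Fin n)} {i j : Fin n} (hij : i < j) (hlt : u i < u j)
    (hmid : ∀ k, i < k → k < j → (u k < u i ↔ u k < u j)) :
    invCount (u * swap i j) = invCount u + 1 := by
  have hij_mem :
      (i, j) ∈ ({p | p.1 < p.2 ∧ (u * swap i j) p.2 < (u * swap i j) p.1} : Finset _) := by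
    rw [mem_filter]
    exact ⟨mem_univ _, hij, by simpa using hlt⟩
  have hinv : Function.Involutive (swap i j) := swap_apply_self i j
  rw [invCount, invCount, ← card_erase_add_one hij_mem]
  congr 1
  refine card_nbij' (reflectPair (swap i j)) (reflectPair (swap i j)) (fun p hp => ?_)
    (fun p hp => ?_) (fun p hp => reflectPair_reflectPair hinv ?_)
    (fun p hp => reflectPair_reflectPair hinv ?_)
  all_goals simp only [mem_coe, mem_erase, mem_filter, mem_univ, true_and] at hp ⊢
  · have hne := (reflectPair_swap_eq_iff hij hp.2.1).not.mpr hp.1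
    have h := mul_swap_reflectPair_lt_iff hij hmid (reflectPair_fst_lt_snd _ hp.2.1) hne
    rw [reflectPair_reflectPair hinv hp.2.1] at h
    exact ⟨reflectPair_fst_lt_snd _ hp.2.1, h.mp hp.2.2⟩
  · have hne : p ≠ (i, j) := by rintro rfl; exact lt_asymm hlt hp.2
    exact ⟨(reflectPair_swap_eq_iff hij hp.1).not.mpr hne, reflectPair_fst_lt_snd _ hp.1,
      (mul_swap_reflectPair_lt_iff hij hmid hp.1 hne).mpr hp.2⟩
  · exact hp.2.1
  · exact hp.1

end Inversions

section CoveringTranspositions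

variable {n : ℕ} {u w : Perm (Fin n)} {i j : Fin n}

theorem symm_mul_swap_apply (u : Perm (Fin n)) (i j y : Fin n) :
    (u * swap i j).symm y = swap i j (u.symm y) := by
  rw [← symm_swap i j]
  rfl

theorem initSeg_mul_swap (hij : i < j) {s : ℕ} (hi : (i : ℕ) < s) (hj : s ≤ j) :
    initSeg (u * swap i j) s = insert (u j) ((initSeg u s).erase (u i)) := by
  ext y
  rw [mem_insert, mem_erase, mem_initSeg, mem_initSeg, symm_mul_swap_apply, Ne,
    ← u.symm_apply_eq, ← u.symm_apply_eq]
  rcases eq_or_ne (u.symm y) i with h | h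
  · simp only [h, swap_apply_left, hij.ne, iff_false, not_lt, not_true, false_and, or_false]
    exact hj
  rcases eq_or_ne (u.symm y) j with h' | h'
  · simp [h', hi]
  · simp [swap_apply_of_ne_of_ne h h', h, h']

theorem initSeg_mul_swap_of_le_or_lt (hij : i < j) {s : ℕ} (hs : s ≤ i ∨ (j : ℕ) < s) :
    initSeg (u * swap i j) s = initSeg u s := by
  ext y
  rw [mem_initSeg, mem_initSeg, symm_mul_swap_apply]
  rw [Fin.lt_def] at hij
  rcases eq_or_ne (u.symm y) i with h | h
  · rw [h, swap_apply_left]; omega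
  rcases eq_or_ne (u.symm y) j with h' | h'
  · rw [h', swap_apply_right]; omega
  · rw [swap_apply_of_ne_of_ne h h']

theorem segCount_mul_swap (hij : i < j) {s : ℕ} (hi : (i : ℕ) < s) (hj : s ≤ j) (g : Fin n) :
    segCount (u * swap i j) 0 s g + (if g ≤ u i then 1 else 0) =
      segCount u 0 s g + if g ≤ u j then 1 else 0 := by
  have hui : u i ∈ initSeg u s := mem_initSeg.mpr (by simpa using hi)
  have huj : u j ∉ (initSeg u s).erase (u i) := by
    simpa [mem_initSeg] using fun _ => hj
  rw [← card_initSeg_filter, ← card_initSeg_filter, initSeg_mul_swap hij hi hj, card_filter,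
    card_filter, sum_insert huj, ← sum_erase_add _ _ hui]
  ring

theorem bruhatLE_mul_swap (huw : bruhatLE u w) (hij : i < j)
    (hbox : ∀ s g, (i : ℕ) < s → s ≤ j → u i < g → g ≤ u j →
      segCount u 0 s g < segCount w 0 s g) :
    bruhatLE (u * swap i j) w := by
  rw [bruhatLE_iff_segCount] at huw ⊢
  intro s g
  by_cases hs : (i : ℕ) < s ∧ s ≤ j
  · have key := segCount_mul_swap (u := u) hij hs.1 hs.2 g
    have := huw s g
    by_cases hgi : g ≤ u i
    · by_cases hgj : g ≤ u j <;> simp only [hgi, hgj, if_true, if_false] at key <;> omega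
    · by_cases hgj : g ≤ u j
      · have := hbox s g hs.1 hs.2 (not_le.mp hgi) hgj
        simp only [hgi, hgj, if_true, if_false] at key
        omega
      · simp only [hgi, hgj, if_false] at key
        omega
  · rw [← card_initSeg_filter, initSeg_mul_swap_of_le_or_lt hij (by omega), card_initSeg_filter]
    exact huw s g

theorem mem_Etil_of_lt (huw : bruhatLE u w) (hij : i < j) (hlt : u i < u j)
    (hmid : ∀ k, i < k → k < j → (u k < u i ↔ u k < u j))
    (hbox : ∀ s g, (i : ℕ) < s → s ≤ j → u i < g → g ≤ u j →
      segCount u 0 s g < segCount w 0 s g) :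
    (u i, u j) ∈ Etil w u := by
  refine ⟨i, j, hij, rfl, ?_, Or.inr ?_⟩ <;> rw [← mul_swap_eq_swap_mul]
  · exact bruhatLE_mul_swap huw hij hbox
  · exact (invCount_mul_swap hij hlt hmid).symm

theorem mem_Etil_of_gt (huw : bruhatLE u w) (hij : i < j) (hgt : u j < u i)
    (hmid : ∀ k, i < k → k < j → (u k < u i ↔ u k < u j)) :
    (u i, u j) ∈ Etil w u := by
  refine ⟨i, j, hij, rfl, ?_, Or.inl ?_⟩ <;> rw [← mul_swap_eq_swap_mul]
  · exact bruhatLE_mul_swap huw hij fun _ _ _ _ hg hg' =>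
      absurd (hgt.trans (hg.trans_le hg')) (lt_irrefl _)
  · have := invCount_mul_swap (u := u * swap i j) hij (by simpa using hgt) fun k hik hkj => by
      simpa [swap_apply_of_ne_of_ne hik.ne' hkj.ne] using (hmid k hik hkj).symm
    rwa [mul_assoc, swap_mul_self, mul_one, eq_comm] at this

end CoveringTranspositions

theorem lt_iff_lt_of_notMem_Ioo {β : Type*} [LinearOrder β] {a b c : β} (hab : a < b)
    (hca : c ≠ a) (h : c ∉ Set.Ioo a b) : c < a ↔ c < b :=
  ⟨fun hc => hc.trans hab,
    fun hc => (lt_or_gt_of_ne hca).resolve_right fun hc' => h ⟨hc', hc⟩⟩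

section Chains

variable {n : ℕ} {α : Type*} [Preorder α] {u w : Perm (Fin n)} {x : Fin n → α}

theorem apply_le_of_inversion (huw : bruhatLE u w) (hx : ∀ p ∈ Etil w u, x p.1 ≤ x p.2)
    {d e : Fin n} (hde : d < e) (hinv : u e < u d) : x (u d) ≤ x (u e) := by
  by_cases hmid : ∃ k, d < k ∧ k < e ∧ u k ∈ Set.Ioo (u e) (u d)
  · obtain ⟨k, hdk, hke, hk⟩ := hmid
    exact (apply_le_of_inversion huw hx hdk hk.2).trans (apply_le_of_inversion huw hx hke hk.1)
  · push Not at hmid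
    exact hx _ <| mem_Etil_of_gt huw hde hinv fun k hdk hke =>
      (lt_iff_lt_of_notMem_Ioo hinv (u.injective.ne hke.ne) (hmid k hdk hke)).symm
termination_by (e : ℕ) - d
decreasing_by all_goals rw [Fin.lt_def] at *; omega

end Chains

section Placeable

variable {n : ℕ} {u w : Perm (Fin n)}

/-- `y` is an admissible greedy choice at step `d` after `u(0), …, u(d-1)`: the counting form
of `domLE (insert y (initSeg u d)) (initSeg w (d + 1))`. -/
def Placeable (w u : Perm (Fin n)) (d y : Fin n) : Prop :=
  ∀ g ≤ y, segCount u 0 d g < segCount w 0 (d + 1) g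

theorem Placeable.anti {d y y' : Fin n} (h : Placeable w u d y) (hy : y' ≤ y) :
    Placeable w u d y' :=
  fun g hg => h g (hg.trans hy)

theorem placeable_of_domLE_insert {d y : Fin n} (hy : y ∉ initSeg u d)
    (h : domLE (insert y (initSeg u d)) (initSeg w (d + 1))) : Placeable w u d y := fun g hg => by
  have := (domLE_iff_card_filter_le.mp h).2 g
  rwa [filter_insert, if_pos hg, card_insert_of_notMem (by simp [hy]), card_initSeg_filter,
    card_initSeg_filter, Nat.add_one_le_iff] at this

theorem exists_placeable_of_segCount_le (huw : bruhatLE u w) {d : Fin n} {s : ℕ} {g y : Fin n}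
    (hds : (d : ℕ) < s) (hdg : u d < g) (hgy : g ≤ y) (hy : Placeable w u d y)
    (hfail : segCount w 0 s g ≤ segCount u 0 s g) :
    ∃ q, d < q ∧ (q : ℕ) < s ∧ g ≤ u q ∧ Placeable w u d (u q) := by
  rw [bruhatLE_iff_segCount] at huw
  have hskip : ∀ h, g ≤ h → segCount u 0 (d + 1) h = segCount u 0 d h := fun h hgh => by
    rw [segCount_succ _ (Nat.zero_le _), if_neg (not_le.mpr (hdg.trans_le hgh)), add_zero]
  have hsplit : ∀ (σ : Perm (Fin n)) h,
      segCount σ 0 s h = segCount σ 0 (d + 1) h + segCount σ (d + 1) s h :=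
    fun σ h => (segCount_add σ (Nat.zero_le _) hds h).symm
  set T : Finset (Fin n) := {q | (d : ℕ) + 1 ≤ q ∧ (q : ℕ) < s ∧ g ≤ u q}
  have hT : T.Nonempty := by
    rw [nonempty_iff_ne_empty, Ne, ← card_eq_zero]
    have := segCount_anti w 0 (d + 1) hgy
    have := hy g hgy
    have := hskip g le_rfl
    have := hsplit u g
    have := hsplit w g
    change segCount u (d + 1) s g ≠ 0
    omega
  obtain ⟨q, hqT, hqmin⟩ := T.exists_min_image u hT
  simp only [T, mem_filter, mem_univ, true_and] at hqT
  refine ⟨q, Fin.lt_def.mpr hqT.1, hqT.2.1, hqT.2.2, fun h hh => ?_⟩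
  rcases lt_or_ge h g with hhg | hgh
  · exact hy h (hhg.le.trans hgy)
  -- no value in `[g, u q)` sits at a position in `(d, s)`, so the counts there agree at `g`, `h`
  have hsame : segCount u (d + 1) s h = segCount u (d + 1) s g := by
    refine (segCount_anti u _ _ hgh).antisymm (card_le_card fun q' hq' => ?_)
    have hq'T : q' ∈ T := hq'
    simp only [mem_filter, mem_univ, true_and] at hq' ⊢
    exact ⟨hq'.1, hq'.2.1, hh.trans (hqmin q' hq'T)⟩
  -- `w` has fewer values `≥ g` than `u` on `(d, s)`, hence also fewer values `≥ h` there;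
  -- with `u ≤ w` at `s` this makes up for the missing `+ 1` at `d + 1`
  have := huw s h
  have := hsplit u h
  have := hsplit w h
  have := hsplit u g
  have := hsplit w g
  have := segCount_anti w (d + 1) s hgh
  have := hskip h hgh
  have := hskip g le_rfl
  have := hy g hgy
  omega

end Placeable

section Ascents

variable {n : ℕ} {α : Type*} [Preorder α] {u w : Perm (Fin n)} {x : Fin n → α}

theorem mem_Etil_of_first_placeable (huw : bruhatLE u w) {d k : Fin n} (hdk : d < k)
    (hlt : u d < u k) (hk : Placeable w u d (u k))
    (hfirst : ∀ q, d < q → q < k → u d < u q → ¬ Placeable w u d (u q)) :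
    (u d, u k) ∈ Etil w u := by
  refine mem_Etil_of_lt huw hdk hlt (fun q hdq hqk => ?_) (fun s g hds hsk hdg hgk => ?_)
  · exact lt_iff_lt_of_notMem_Ioo hlt (u.injective.ne hdq.ne')
      fun hq => hfirst q hdq hqk hq.1 (hk.anti hq.2.le)
  · by_contra! hfail
    obtain ⟨q, hdq, hqs, hgq, hq⟩ := exists_placeable_of_segCount_le huw hds hdg hgk hk hfail
    exact hfirst q hdq (Fin.lt_def.mpr (by omega)) (hdg.trans_le hgq) hq

theorem placeable_of_first_placeable (huw : bruhatLE u w) {d k e : Fin n} (hdk : d < k)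
    (hlt : u d < u k) (hke : u k < u e) (he : Placeable w u d (u e))
    (hfirst : ∀ q, d < q → q < k → u d < u q → ¬ Placeable w u d (u q)) :
    Placeable w u k (u e) := by
  intro g hg
  have hsucc := segCount_succ u (Nat.zero_le k) g
  by_cases hgk : g ≤ u k
  · have := (bruhatLE_iff_segCount.mp huw) (k + 1) g
    rw [if_pos hgk] at hsucc
    omega
  by_contra! hfail
  rw [if_neg hgk, add_zero] at hsucc
  obtain ⟨q, hdq, hqs, hgq, hq⟩ := exists_placeable_of_segCount_le huw (s := k + 1)
    (by simpa using Nat.lt_succ_of_lt hdk) ((hlt.trans (not_le.mp hgk))) hg he (by omega)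
  have hqk : q < k := lt_of_le_of_ne (Fin.le_def.mpr (by omega))
    (by rintro rfl; exact hgk hgq)
  exact hfirst q hdq hqk (hlt.trans ((not_le.mp hgk).trans_le hgq)) hq

theorem apply_le_of_placeable (huw : bruhatLE u w) (hx : ∀ p ∈ Etil w u, x p.1 ≤ x p.2)
    {d e : Fin n} (hde : d < e) (he : Placeable w u d (u e)) : x (u d) ≤ x (u e) := by
  rcases lt_or_gt_of_ne (u.injective.ne hde.ne) with hlt | hgt
  swap
  · exact apply_le_of_inversion huw hx hde hgt
  obtain ⟨k, ⟨hdk, hke, hdk', hk⟩, hmin⟩ := wellFounded_lt.has_min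
    {k | d < k ∧ k ≤ e ∧ u d < u k ∧ Placeable w u d (u k)} ⟨e, hde, le_rfl, hlt, he⟩
  have hfirst : ∀ q, d < q → q < k → u d < u q → ¬ Placeable w u d (u q) :=
    fun q hdq hqk hdq' hq => hmin q ⟨hdq, hqk.le.trans hke, hdq', hq⟩ hqk
  have hdk_le : x (u d) ≤ x (u k) := hx _ (mem_Etil_of_first_placeable huw hdk hdk' hk hfirst)
  rcases hke.eq_or_lt with rfl | hke
  · exact hdk_le
  refine hdk_le.trans ?_
  rcases lt_or_gt_of_ne (u.injective.ne hke.ne) with hlt' | hgt'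
  · exact apply_le_of_placeable huw hx hke
      (placeable_of_first_placeable huw hdk hdk' hlt' he hfirst)
  · exact apply_le_of_inversion huw hx hke hgt'
termination_by (e : ℕ) - d
decreasing_by rw [Fin.lt_def] at *; omega

end Ascents

theorem sub_lt_sub_of_strictMonoOn_Iic {f : ℕ → ℕ} {m t : ℕ}
    (hf : StrictMonoOn f (Set.Iic m)) (hm : 2 ≤ m) (ht : t < m) : f (t + 1) - f t < f m - f 0 := by
  have hlt : ∀ a b, b ≤ m → a < b → f a < f b := fun a b hb hab =>
    hf (Set.mem_Iic.mpr (hab.le.trans hb)) (Set.mem_Iic.mpr hb) hab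
  have := hlt t (t + 1) ht (Nat.lt_succ_self t)
  rcases Nat.eq_zero_or_pos t with rfl | ht0
  · have := hlt 1 m le_rfl hm
    rw [zero_add] at *
    omega
  · have := hlt 0 t ht.le ht0
    have : f (t + 1) ≤ f m := (hf.le_iff_le (Set.mem_Iic.mpr ht) (Set.mem_Iic.mpr le_rfl)).mpr ht
    omega

section Indecomposables

variable {n : ℕ} {α : Type*} [Preorder α] {u w : Perm (Fin n)} {x : Fin n → α}

theorem symm_lt_symm_of_mem_Etil {p : Fin n × Fin n} (hp : p ∈ Etil w u) :
    u.symm p.1 < u.symm p.2 := by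
  obtain ⟨i, j, hij, rfl, -⟩ := hp
  simpa using hij

/-- Splitting a decomposable pair strictly shortens the distance between the positions of its
entries, so induction on that distance reduces `Ẽ_w(u)` to `E_w(u)`. -/
theorem le_of_mem_Etil (hx : ∀ a b, (a, b) ∈ Ew w u → x a ≤ x b) {p : Fin n × Fin n}
    (hp : p ∈ Etil w u) : x p.1 ≤ x p.2 := by
  induction hN : (u.symm p.2 : ℕ) - u.symm p.1 using Nat.strong_induction_on generalizing p with
  | _ N ih =>
  by_cases hdec : Decomposable w u p
  swap
  · exact hx p.1 p.2 ⟨hp, hdec⟩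
  obtain ⟨m, c, hm, hc0, hcm, hc⟩ := hdec
  have hpos : StrictMonoOn (fun t => (u.symm (c t) : ℕ)) (Set.Iic m) :=
    strictMonoOn_Iic_of_lt_succ fun t ht => by
      simpa [Order.succ_eq_add_one] using symm_lt_symm_of_mem_Etil (hc t ht).1
  have hchain : MonotoneOn (x ∘ c) (Set.Iic m) := by
    refine monotoneOn_of_le_succ Set.ordConnected_Iic fun t _ _ ht => ?_
    rw [Order.succ_eq_add_one, Set.mem_Iic] at ht
    have := sub_lt_sub_of_strictMonoOn_Iic hpos hm ht
    simp only [hc0, hcm] at this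
    exact ih _ (by dsimp only; omega) (hc t ht).1 rfl
  simpa [hc0, hcm] using hchain (Set.mem_Iic.mpr (Nat.zero_le m)) (Set.mem_Iic.mpr le_rfl)
    (Nat.zero_le m)

end Indecomposables

section Greedy

variable {n : ℕ} {u w v : Perm (Fin n)}

theorem image_filter_lt_eq_initSeg {f : Fin n → Fin n} (hf : ∀ e, f e = u e) (d : Fin n) :
    ({e | e < d} : Finset (Fin n)).image f = initSeg u d := by
  rw [initSeg, image_congr fun e _ => hf e]
  simp only [Fin.lt_def]

theorem insert_initSeg (u : Perm (Fin n)) (d : Fin n) :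
    insert (u d) (initSeg u d) = initSeg u (d + 1) := by
  ext y
  simp only [mem_insert, mem_initSeg, ← u.symm_apply_eq, Fin.ext_iff]
  omega

theorem apply_notMem_initSeg (u : Perm (Fin n)) {d e : Fin n} (hde : d ≤ e) :
    u e ∉ initSeg u d := by
  simpa [mem_initSeg] using hde

theorem le_of_mem_Etil_of_greedyRel {α : Type*} [Preorder α] {x : Fin n → α}
    (hv : GreedyRel w v u) (hmono : Monotone (x ∘ v)) {p : Fin n × Fin n} (hp : p ∈ Etil w u) :
    x p.1 ≤ x p.2 := by
  obtain ⟨idx, hval, hleast⟩ := hv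
  obtain ⟨i, j, hij, rfl, hle, -⟩ := hp
  -- `idx j` is still available when `idx i` is chosen, because `u * swap i j ≤ w`
  have hcand : idx i ≤ idx j := by
    refine (hleast i).2 ⟨fun e hei => (hleast j).1.1 e (hei.trans hij), ?_⟩
    rw [image_filter_lt_eq_initSeg (fun e => (hval e).symm), ← hval j]
    have := hle (i + 1)
    rwa [← mul_swap_eq_swap_mul, initSeg_mul_swap hij (Nat.lt_succ_self i) hij,
      ← insert_initSeg, erase_insert (apply_notMem_initSeg u le_rfl)] at this
  simpa only [Function.comp_apply, ← hval] using hmono hcand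

theorem greedyRel_mul_sort {α : Type*} [LinearOrder α] {x : Fin n → α} (huw : bruhatLE u w)
    (hx : ∀ p ∈ Etil w u, x p.1 ≤ x p.2) : GreedyRel w (u * Tuple.sort (x ∘ u)) u := by
  set σ := Tuple.sort (x ∘ u)
  obtain ⟨hmono, hstable⟩ := Tuple.eq_sort_iff.mp (rfl : σ = σ)
  have hval : ∀ d, (u * σ) (σ.symm d) = u d := fun d => by simp
  refine ⟨σ.symm, fun d => (hval d).symm, fun d => ⟨⟨fun e hed => ?_, ?_⟩, ?_⟩⟩
  · exact σ.symm.injective.ne hed.ne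
  · rw [image_filter_lt_eq_initSeg hval, hval, insert_initSeg]
    exact huw (d + 1)
  rintro i ⟨hfresh, hdom⟩
  by_contra! hlt
  set e := σ i with he
  have hde : d < e := by
    refine lt_of_le_of_ne (not_lt.mp fun hed => hfresh e hed (by simp [he])) ?_
    rintro rfl
    exact hlt.ne (by simp [he])
  -- `σ` sorts by `x ∘ u`, breaking ties by position
  have hxlt : x (u e) < x (u d) := by
    have := hmono hlt.le
    simp only [Function.comp_apply, Equiv.apply_symm_apply] at this
    refine this.lt_of_ne fun heq => ?_
    have := hstable _ _ hlt (by simpa using heq)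
    rw [Equiv.apply_symm_apply] at this
    exact lt_asymm hde this
  rw [image_filter_lt_eq_initSeg hval, Perm.mul_apply] at hdom
  exact hxlt.not_ge <| apply_le_of_placeable huw hx hde <|
    placeable_of_domLE_insert (apply_notMem_initSeg u hde.le) hdom

end Greedy

/-- For `u ≤ w`, the dual cone of the cone generated by
`{e_b − e_a : (a,b) ∈ E_w(u)}` is the union of the cones `C(v)` over all `v` with `v' = u`. -/
theorem dual_cone_eq_union_u {n : ℕ} (w u : Equiv.Perm (Fin n))
    (huw : bruhatLE u w) (x : Fin n → ℝ) :
    (∀ a b : Fin n, (a, b) ∈ Ew w u → x a ≤ x b) ↔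
      ∃ v : Equiv.Perm (Fin n), GreedyRel w v u ∧
        ∀ i j : Fin n, i ≤ j → x (v i) ≤ x (v j) := by
  constructor
  · intro hx
    exact ⟨u * Tuple.sort (x ∘ u), greedyRel_mul_sort huw fun p hp => le_of_mem_Etil hx hp,
      fun i j hij => Tuple.monotone_sort (x ∘ u) hij⟩
  · rintro ⟨v, hv, hmono⟩ a b hab
    exact le_of_mem_Etil_of_greedyRel hv (fun i j hij => hmono i j hij) hab.1

end SchubertToric
end
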